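/- arXiv:2509.08700 — 8 statements merged into one kernel-verified Lean document; each statement's English description precedes it below -/
import Mathlib

section
/- Let ω, η ∈ ℂ, let m ≥ 2 be an integer, let ε ∈ {1, −1} ⊆ ℂ, let σ : ℂ → ℂ, and let Ψ ∈ ℂ. Assume: (i) σ(ω/m + ω) = ε · σ(ω/m) · exp(η·(ω/m + ω/2)); (ii) σ((m+1)·(ω/m)) = (−1)^m · σ(ω/m)^((m+1)²) · Ψ; (iii) σ(ω/m) ≠ 0. Then Ψ ≠ 0 and (σ(ω/m) · exp(−η·ω/(2m²)))^(m(m+2)) = ε · (−1)^m / Ψ. -/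
/-!
Put `z = ω / m` and `s = σ z`. Since `(m + 1) z = z + ω`, the two laws evaluate `σ` at the same
point, giving `ε s exp(η (z + ω/2)) = (-1)^m s^((m+1)^2) Ψ`; the left side is nonzero, hence so is
`Ψ`. Dividing by `s` leaves `s^(m(m+2))` on the right, and `exp(η (z + ω/2))` is exactly the
`m(m+2)`-th power of `exp(η ω / (2 m^2))`, because `m(m+2) / (2 m^2) = 1/m + 1/2`.
-/

open Complex

lemma natCast_add_one_mul_div_self {K : Type*} [Field K] {n : ℕ} (hn : (n : K) ≠ 0)
    (x : K) : ((n : K) + 1) * (x / n) = x / n + x := by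
  rw [add_mul, one_mul, mul_div_cancel₀ x hn, add_comm]

lemma exp_div_two_sq_pow {m : ℕ} (hm : (m : ℂ) ≠ 0) (c : ℂ) :
    exp (c / (2 * (m : ℂ) ^ 2)) ^ (m * (m + 2)) = exp (c / m + c / 2) := by
  rw [← exp_nat_mul]
  congr 1
  push_cast
  field_simp
  ring

lemma pow_mul_inv_eq_of_mul_eq {K : Type*} [Field K] {ε s E Ψ : K} (m : ℕ) (hs : s ≠ 0)
    (hE : E ≠ 0) (hΨ : Ψ ≠ 0) (h : ε * s * E = (-1) ^ m * s ^ ((m + 1) ^ 2) * Ψ) :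
    s ^ (m * (m + 2)) * E⁻¹ = ε * (-1) ^ m / Ψ := by
  have hsq : s ^ ((m + 1) ^ 2) = s ^ (m * (m + 2)) * s := by rw [← pow_succ]; ring_nf
  have hsign : ((-1 : K) ^ m) ^ 2 = 1 := by rw [← pow_mul, mul_comm, pow_mul]; norm_num
  rw [hsq] at h
  field_simp
  apply mul_right_cancel₀ hs
  linear_combination (-(-1) ^ m) * h - s ^ (m * (m + 2)) * Ψ * s * hsign

theorem sigma_torsion_value (ω η : ℂ) (m : ℕ) (hm : 2 ≤ m) (ε : ℂ)
    (hε : ε = 1 ∨ ε = -1) (σ : ℂ → ℂ) (Ψ : ℂ)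
    (h1 : σ (ω / m + ω) = ε * σ (ω / m) * Complex.exp (η * (ω / m + ω / 2)))
    (h2 : σ ((m + 1 : ℂ) * (ω / m)) = (-1 : ℂ) ^ m * σ (ω / m) ^ ((m + 1) ^ 2) * Ψ)
    (h3 : σ (ω / m) ≠ 0) :
    Ψ ≠ 0 ∧
      (σ (ω / m) * Complex.exp (-η * ω / (2 * (m : ℂ) ^ 2))) ^ (m * (m + 2)) =
        ε * (-1 : ℂ) ^ m / Ψ := by
  have hm0 : (m : ℂ) ≠ 0 := Nat.cast_ne_zero.mpr (by omega)
  have hε0 : ε ≠ 0 := by rcases hε with rfl | rfl <;> norm_num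
  have hrel : ε * σ (ω / m) * exp (η * (ω / m + ω / 2)) =
      (-1 : ℂ) ^ m * σ (ω / m) ^ ((m + 1) ^ 2) * Ψ := by
    rw [← h1, ← h2, natCast_add_one_mul_div_self hm0]
  have hΨ : Ψ ≠ 0 :=
    right_ne_zero_of_mul (hrel ▸ mul_ne_zero (mul_ne_zero hε0 h3) (exp_ne_zero _))
  refine ⟨hΨ, ?_⟩
  have hexp : exp (-η * ω / (2 * (m : ℂ) ^ 2)) ^ (m * (m + 2)) =
      (exp (η * (ω / m + ω / 2)))⁻¹ := by
    rw [exp_div_two_sq_pow hm0, ← exp_neg]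
    ring_nf
  rw [mul_pow, hexp]
  exact pow_mul_inv_eq_of_mul_eq m h3 (exp_ne_zero _) hΨ hrel
end

section
/- Let ω, η, z, c ∈ ℂ, let m ≥ 2 be an integer, let ε ∈ {1, −1} ⊆ ℂ, let σ : ℂ → ℂ, and let Ψ₁, Ψ₂, Ψ₃ ∈ ℂ. Assume: (i) σ(mz + ω) = ε·σ(mz)·exp(η·(mz + ω/2)); (ii) σ(mz) = (−1)^(m−1)·σ(z)^(m²)·Ψ₁; (iii) σ(m·(z + ω/m)) = (−1)^(m−1)·σ(z + ω/m)^(m²)·Ψ₂; (iv) σ(ω/m + ω) = ε·σ(ω/m)·exp(η·(ω/m + ω/2)); (v) σ((m+1)·(ω/m)) = (−1)^m·σ(ω/m)^((m+1)²)·Ψ₃; (vi) σ(z) ≠ 0, σ(ω/m) ≠ 0, and Ψ₂ ≠ 0. Define f := σ(ω/m + z)·exp(−c·(ω/m))/(σ(ω/m)·σ(z)). Then f^(m²(m+2)) = (−1)^m · Ψ₁^(m+2) · Ψ₃^m / Ψ₂^(m+2) · exp(−m²(m+2)·((ω/m)·c − (η/m)·z)). -/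
open Complex

theorem serre_at_torsion_first_variable (ω η z c : ℂ) (m : ℕ) (hm : 2 ≤ m) (ε : ℂ)
    (hε : ε = 1 ∨ ε = -1) (σ : ℂ → ℂ) (Ψ₁ Ψ₂ Ψ₃ : ℂ)
    (h1 : σ ((m : ℂ) * z + ω) = ε * σ ((m : ℂ) * z) * Complex.exp (η * ((m : ℂ) * z + ω / 2)))
    (h2 : σ ((m : ℂ) * z) = (-1 : ℂ) ^ (m - 1) * σ z ^ (m ^ 2) * Ψ₁)
    (h3 : σ ((m : ℂ) * (z + ω / m)) = (-1 : ℂ) ^ (m - 1) * σ (z + ω / m) ^ (m ^ 2) * Ψ₂)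
    (h4 : σ (ω / m + ω) = ε * σ (ω / m) * Complex.exp (η * (ω / m + ω / 2)))
    (h5 : σ ((m + 1 : ℂ) * (ω / m)) = (-1 : ℂ) ^ m * σ (ω / m) ^ ((m + 1) ^ 2) * Ψ₃)
    (h6 : σ z ≠ 0) (h7 : σ (ω / m) ≠ 0) (h8 : Ψ₂ ≠ 0) :
    (σ (ω / m + z) * Complex.exp (-c * (ω / m)) / (σ (ω / m) * σ z)) ^ (m ^ 2 * (m + 2)) =
      (-1 : ℂ) ^ m * Ψ₁ ^ (m + 2) * Ψ₃ ^ m / Ψ₂ ^ (m + 2) *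
        Complex.exp (-((m : ℂ) ^ 2 * ((m : ℂ) + 2)) * ((ω / m) * c - (η / m) * z)) := by
  have hm0 : (m : ℂ) ≠ 0 := Nat.cast_ne_zero.mpr (by omega)
  set s := σ (z + ω / m) with hs
  set u := σ (ω / m) with hu
  set v := σ z with hv
  set X := Complex.exp (η * ((m : ℂ) * z + ω / 2)) with hX
  set Y := Complex.exp (η * (ω / m + ω / 2)) with hY
  set E := Complex.exp (-c * (ω / m)) with hE
  set E' := Complex.exp (-((m : ℂ) ^ 2 * ((m : ℂ) + 2)) * ((ω / m) * c - (η / m) * z)) with hE'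
  have hε2 : ε ^ 2 = 1 := by rcases hε with h | h <;> simp [h]
  have hεm : ε ^ (m + 2) = ε ^ m := by rw [pow_add, hε2, mul_one]
  have hneg : ((-1 : ℂ)) ^ (m - 1) ≠ 0 := by
    simp [pow_ne_zero]
  -- key1
  have harg1 : (m : ℂ) * (z + ω / m) = (m : ℂ) * z + ω := by field_simp
  have key1 : s ^ (m ^ 2) * Ψ₂ = ε * v ^ (m ^ 2) * Ψ₁ * X := by
    have := h3
    rw [harg1, h1, h2] at this
    have h' : (-1 : ℂ) ^ (m - 1) * (s ^ (m ^ 2) * Ψ₂) =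
        (-1 : ℂ) ^ (m - 1) * (ε * v ^ (m ^ 2) * Ψ₁ * X) := by
      linear_combination -this
    exact mul_left_cancel₀ hneg h'
  -- key2
  have harg2 : ((m : ℂ) + 1) * (ω / m) = ω / m + ω := by field_simp; ring
  have key2 : (-1 : ℂ) ^ m * u ^ ((m + 1) ^ 2) * Ψ₃ = ε * u * Y := by
    have := h5
    rw [harg2, h4] at this
    exact this.symm
  -- (-1)^(m*m) = (-1)^m
  have hnegmm : ((-1 : ℂ)) ^ (m * m) = (-1 : ℂ) ^ m := by
    rcases Nat.even_or_odd m with he | ho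
    · rw [he.neg_one_pow, (he.mul_left m).neg_one_pow]
    · rw [ho.neg_one_pow, (ho.mul ho).neg_one_pow]
  -- keyU : u ^ (m^2*(m+2)) * ((-1)^m * Ψ₃^m) = ε^m * Y^m
  have keyU : u ^ (m ^ 2 * (m + 2)) * ((-1 : ℂ) ^ m * Ψ₃ ^ m) = ε ^ m * Y ^ m := by
    have h' := congrArg (· ^ m) key2
    simp only [mul_pow, ← pow_mul] at h'
    have hexp : (m + 1) ^ 2 * m = m ^ 2 * (m + 2) + m := by ring
    rw [hnegmm, hexp, pow_add] at h'
    have h'' : u ^ m * ((-1 : ℂ) ^ m * (u ^ (m ^ 2 * (m + 2)) * Ψ₃ ^ m)) =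
        u ^ m * (ε ^ m * Y ^ m) := by linear_combination h'
    have := mul_left_cancel₀ (pow_ne_zero m h7) h''
    linear_combination this
  -- exp relation
  have hexp : X ^ (m + 2) * E ^ (m ^ 2 * (m + 2)) = Y ^ m * E' := by
    rw [hX, hY, hE, hE', ← Complex.exp_nat_mul, ← Complex.exp_nat_mul, ← Complex.exp_nat_mul,
      ← Complex.exp_add, ← Complex.exp_add]
    congr 1
    push_cast
    field_simp
    ring
  -- main cleared equation
  have key1' : s ^ (m ^ 2 * (m + 2)) * Ψ₂ ^ (m + 2) =
      ε ^ (m + 2) * v ^ (m ^ 2 * (m + 2)) * Ψ₁ ^ (m + 2) * X ^ (m + 2) := by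
    have h' := congrArg (· ^ (m + 2)) key1
    simp only [mul_pow, ← pow_mul] at h'
    exact h'
  have T : s ^ (m ^ 2 * (m + 2)) * E ^ (m ^ 2 * (m + 2)) * Ψ₂ ^ (m + 2) =
      (-1 : ℂ) ^ m * Ψ₁ ^ (m + 2) * Ψ₃ ^ m * E' * u ^ (m ^ 2 * (m + 2)) *
        v ^ (m ^ 2 * (m + 2)) := by
    calc s ^ (m ^ 2 * (m + 2)) * E ^ (m ^ 2 * (m + 2)) * Ψ₂ ^ (m + 2)
        = (s ^ (m ^ 2 * (m + 2)) * Ψ₂ ^ (m + 2)) * E ^ (m ^ 2 * (m + 2)) := by ring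
      _ = ε ^ (m + 2) * v ^ (m ^ 2 * (m + 2)) * Ψ₁ ^ (m + 2) *
            (X ^ (m + 2) * E ^ (m ^ 2 * (m + 2))) := by rw [key1']; ring
      _ = ε ^ m * v ^ (m ^ 2 * (m + 2)) * Ψ₁ ^ (m + 2) * (Y ^ m * E') := by
            rw [hεm, hexp]
      _ = v ^ (m ^ 2 * (m + 2)) * Ψ₁ ^ (m + 2) * E' * (ε ^ m * Y ^ m) := by ring
      _ = v ^ (m ^ 2 * (m + 2)) * Ψ₁ ^ (m + 2) * E' *
            (u ^ (m ^ 2 * (m + 2)) * ((-1 : ℂ) ^ m * Ψ₃ ^ m)) := by rw [keyU]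
      _ = (-1 : ℂ) ^ m * Ψ₁ ^ (m + 2) * Ψ₃ ^ m * E' * u ^ (m ^ 2 * (m + 2)) *
            v ^ (m ^ 2 * (m + 2)) := by ring
  -- finish
  have hcomm : σ (ω / m + z) = s := by rw [hs, add_comm]
  rw [hcomm, div_pow, mul_pow, mul_pow, div_eq_iff (mul_ne_zero (pow_ne_zero _ h7) (pow_ne_zero _ h6)),
    div_mul_eq_mul_div, div_mul_eq_mul_div, eq_div_iff (pow_ne_zero _ h8)]
  linear_combination T
end

section
/- Let ω, η, z, c′ ∈ ℂ, let m ≥ 2 be an integer, let ε ∈ {1, −1} ⊆ ℂ, let σ : ℂ → ℂ, and let Ψ₁, Ψ₂, Ψ₃ ∈ ℂ. Assume: (i) σ(mz + ω) = ε·σ(mz)·exp(η·(mz + ω/2)); (ii) σ(mz) = (−1)^(m−1)·σ(z)^(m²)·Ψ₁; (iii) σ(m·(z + ω/m)) = (−1)^(m−1)·σ(z + ω/m)^(m²)·Ψ₂; (iv) σ(ω/m + ω) = ε·σ(ω/m)·exp(η·(ω/m + ω/2)); (v) σ((m+1)·(ω/m)) = (−1)^m·σ(ω/m)^((m+1)²)·Ψ₃;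 (vi) σ(z) ≠ 0, σ(ω/m) ≠ 0, and Ψ₂ ≠ 0. Define f := σ(z + ω/m)·exp(−c′·z)/(σ(z)·σ(ω/m)). Then f^(m²(m+2)) = (−1)^m · Ψ₁^(m+2) · Ψ₃^m / Ψ₂^(m+2) · exp(−m²(m+2)·(c′ − η/m)·z). -/
open Complex

theorem serre_at_torsion_second_variable (ω η z c' : ℂ) (m : ℕ) (hm : 2 ≤ m) (ε : ℂ)
    (hε : ε = 1 ∨ ε = -1) (σ : ℂ → ℂ) (Ψ₁ Ψ₂ Ψ₃ : ℂ)
    (h1 : σ ((m : ℂ) * z + ω) = ε * σ ((m : ℂ) * z) * Complex.exp (η * ((m : ℂ) * z + ω / 2)))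
    (h2 : σ ((m : ℂ) * z) = (-1 : ℂ) ^ (m - 1) * σ z ^ (m ^ 2) * Ψ₁)
    (h3 : σ ((m : ℂ) * (z + ω / m)) = (-1 : ℂ) ^ (m - 1) * σ (z + ω / m) ^ (m ^ 2) * Ψ₂)
    (h4 : σ (ω / m + ω) = ε * σ (ω / m) * Complex.exp (η * (ω / m + ω / 2)))
    (h5 : σ ((m + 1 : ℂ) * (ω / m)) = (-1 : ℂ) ^ m * σ (ω / m) ^ ((m + 1) ^ 2) * Ψ₃)
    (h6 : σ z ≠ 0) (h7 : σ (ω / m) ≠ 0) (h8 : Ψ₂ ≠ 0) :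
    (σ (z + ω / m) * Complex.exp (-c' * z) / (σ z * σ (ω / m))) ^ (m ^ 2 * (m + 2)) =
      (-1 : ℂ) ^ m * Ψ₁ ^ (m + 2) * Ψ₃ ^ m / Ψ₂ ^ (m + 2) *
        Complex.exp (-((m : ℂ) ^ 2 * ((m : ℂ) + 2)) * (c' - η / m) * z) := by
  have hm0 : (m : ℂ) ≠ 0 := Nat.cast_ne_zero.2 (by omega)
  have hεne : ε ≠ 0 := by rcases hε with rfl | rfl <;> norm_num
  have hne1 : ((-1 : ℂ)) ^ (m - 1) ≠ 0 := pow_ne_zero _ (by norm_num)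
  -- Key fact A
  have hA : σ (z + ω / m) ^ (m ^ 2) * Ψ₂ =
      ε * σ z ^ (m ^ 2) * Ψ₁ * Complex.exp (η * ((m : ℂ) * z + ω / 2)) := by
    have hmz : (m : ℂ) * (z + ω / m) = (m : ℂ) * z + ω := by field_simp
    rw [hmz, h1, h2] at h3
    apply mul_left_cancel₀ hne1
    linear_combination -h3
  -- Key fact B
  have hB : σ (ω / m) ^ (m ^ 2 + 2 * m) * Ψ₃ =
      ε * (-1 : ℂ) ^ m * Complex.exp (η * (ω / m + ω / 2)) := by
    have hq : ((m : ℂ) + 1) * (ω / m) = ω / m + ω := by field_simp; ring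
    rw [hq, h4] at h5
    have hpow : σ (ω / m) ^ ((m + 1) ^ 2) = σ (ω / m) ^ (m ^ 2 + 2 * m) * σ (ω / m) := by
      rw [← pow_succ]
      congr 1
      ring
    rw [hpow] at h5
    have hneg : ((-1 : ℂ)) ^ m * (-1 : ℂ) ^ m = 1 := by
      rw [← pow_add]
      exact Even.neg_one_pow ⟨m, rfl⟩
    apply mul_right_cancel₀ h7
    linear_combination (-((-1 : ℂ)) ^ m) * h5 -
      (σ (ω / m) ^ (m ^ 2 + 2 * m) * σ (ω / m) * Ψ₃) * hneg
  -- powered versions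
  have hA' : σ (z + ω / m) ^ (m ^ 2 * (m + 2)) * Ψ₂ ^ (m + 2) =
      ε ^ (m + 2) * σ z ^ (m ^ 2 * (m + 2)) * Ψ₁ ^ (m + 2) *
        Complex.exp (η * ((m : ℂ) * z + ω / 2)) ^ (m + 2) := by
    calc σ (z + ω / m) ^ (m ^ 2 * (m + 2)) * Ψ₂ ^ (m + 2)
        = (σ (z + ω / m) ^ (m ^ 2) * Ψ₂) ^ (m + 2) := by rw [mul_pow, pow_mul]
      _ = (ε * σ z ^ (m ^ 2) * Ψ₁ * Complex.exp (η * ((m : ℂ) * z + ω / 2))) ^ (m + 2) := by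
          rw [hA]
      _ = _ := by rw [mul_pow, mul_pow, mul_pow, pow_mul]
  have hB' : σ (ω / m) ^ (m ^ 2 * (m + 2)) * Ψ₃ ^ m =
      ε ^ m * (-1 : ℂ) ^ (m * m) * Complex.exp (η * (ω / m + ω / 2)) ^ m := by
    have hexp : m ^ 2 * (m + 2) = (m ^ 2 + 2 * m) * m := by ring
    calc σ (ω / m) ^ (m ^ 2 * (m + 2)) * Ψ₃ ^ m
        = (σ (ω / m) ^ (m ^ 2 + 2 * m) * Ψ₃) ^ m := by rw [mul_pow, hexp, pow_mul]
      _ = (ε * (-1 : ℂ) ^ m * Complex.exp (η * (ω / m + ω / 2))) ^ m := by rw [hB]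
      _ = _ := by rw [mul_pow, mul_pow, ← pow_mul]
  -- exponential identity
  have hExp : Complex.exp (η * ((m : ℂ) * z + ω / 2)) ^ (m + 2) *
      Complex.exp (-c' * z) ^ (m ^ 2 * (m + 2)) =
      Complex.exp (-((m : ℂ) ^ 2 * ((m : ℂ) + 2)) * (c' - η / m) * z) *
        Complex.exp (η * (ω / m + ω / 2)) ^ m := by
    rw [← Complex.exp_nat_mul, ← Complex.exp_nat_mul, ← Complex.exp_nat_mul,
      ← Complex.exp_add, ← Complex.exp_add]
    congr 1
    push_cast
    field_simp
    ring
  -- sign facts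
  have hfact : ε ^ (m + 2) = (-1 : ℂ) ^ m * ε ^ m * (-1 : ℂ) ^ (m * m) := by
    have hsign : ((-1 : ℂ)) ^ m * (-1 : ℂ) ^ (m * m) = 1 := by
      rw [← pow_add]
      refine Even.neg_one_pow ?_
      have h := Nat.even_mul_succ_self m
      rwa [show m * (m + 1) = m + m * m by ring] at h
    have he : ε ^ (m + 2) = ε ^ m := by
      rcases hε with rfl | rfl
      · simp
      · rw [pow_add]; norm_num
    rw [he]
    rw [show (-1 : ℂ) ^ m * ε ^ m * (-1 : ℂ) ^ (m * m)
        = ε ^ m * ((-1 : ℂ) ^ m * (-1 : ℂ) ^ (m * m)) by ring, hsign, mul_one]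
  -- final computation
  have hSQ : (σ z * σ (ω / m)) ^ (m ^ 2 * (m + 2)) ≠ 0 :=
    pow_ne_zero _ (mul_ne_zero h6 h7)
  have hΨ₂N : Ψ₂ ^ (m + 2) ≠ 0 := pow_ne_zero _ h8
  rw [div_pow, div_mul_eq_mul_div, div_eq_div_iff hSQ hΨ₂N, mul_pow]
  calc σ (z + ω / m) ^ (m ^ 2 * (m + 2)) * Complex.exp (-c' * z) ^ (m ^ 2 * (m + 2)) *
        Ψ₂ ^ (m + 2)
      = (σ (z + ω / m) ^ (m ^ 2 * (m + 2)) * Ψ₂ ^ (m + 2)) *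
          Complex.exp (-c' * z) ^ (m ^ 2 * (m + 2)) := by ring
    _ = (ε ^ (m + 2) * σ z ^ (m ^ 2 * (m + 2)) * Ψ₁ ^ (m + 2) *
          Complex.exp (η * ((m : ℂ) * z + ω / 2)) ^ (m + 2)) *
          Complex.exp (-c' * z) ^ (m ^ 2 * (m + 2)) := by rw [hA']
    _ = ε ^ (m + 2) * σ z ^ (m ^ 2 * (m + 2)) * Ψ₁ ^ (m + 2) *
          (Complex.exp (η * ((m : ℂ) * z + ω / 2)) ^ (m + 2) *
            Complex.exp (-c' * z) ^ (m ^ 2 * (m + 2))) := by ring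
    _ = ((-1 : ℂ) ^ m * ε ^ m * (-1 : ℂ) ^ (m * m)) * σ z ^ (m ^ 2 * (m + 2)) *
          Ψ₁ ^ (m + 2) *
          (Complex.exp (-((m : ℂ) ^ 2 * ((m : ℂ) + 2)) * (c' - η / m) * z) *
            Complex.exp (η * (ω / m + ω / 2)) ^ m) := by rw [hExp, hfact]
    _ = (-1 : ℂ) ^ m * Ψ₁ ^ (m + 2) *
          (ε ^ m * (-1 : ℂ) ^ (m * m) * Complex.exp (η * (ω / m + ω / 2)) ^ m) *
          Complex.exp (-((m : ℂ) ^ 2 * ((m : ℂ) + 2)) * (c' - η / m) * z) *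
          σ z ^ (m ^ 2 * (m + 2)) := by ring
    _ = (-1 : ℂ) ^ m * Ψ₁ ^ (m + 2) * (σ (ω / m) ^ (m ^ 2 * (m + 2)) * Ψ₃ ^ m) *
          Complex.exp (-((m : ℂ) ^ 2 * ((m : ℂ) + 2)) * (c' - η / m) * z) *
          σ z ^ (m ^ 2 * (m + 2)) := by rw [hB']
    _ = _ := by ring
end

section
/- Let σ : ℂ → ℂ, let q, z, c, w₁, w₂, Ψ ∈ ℂ, and let m ≥ 1 be an integer. Assume: (i) σ(−w) = −σ(w) for all w ∈ ℂ; (ii) w₁ − w₂ = −σ(z+q)·σ(z−q)/(σ(z)²·σ(q)²); (iii) σ(mz) = (−1)^(m−1)·σ(z)^(m²)·Ψ; (iv) σ(z) ≠ 0, σ(q) ≠ 0, σ(mz) ≠ 0, and σ(z+q) ≠ 0. Define f_q(v) := σ(v+q)·exp(−c·v)/(σ(v)·σ(q)). Then (w₁ − w₂)^m · Ψ · f_q(mz)/f_q(z)^m = (−1)^(m−1)·σ(q−z)^m·σ(mz+q)/(σ(z)^(m+m²)·σ(q)^(m+1)). -/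
open Complex

theorem serre_multiplication_key (σ : ℂ → ℂ) (q z c w₁ w₂ Ψ : ℂ) (m : ℕ) (hm : 1 ≤ m)
    (hodd : ∀ w : ℂ, σ (-w) = -σ w)
    (hadd : w₁ - w₂ = -σ (z + q) * σ (z - q) / (σ z ^ 2 * σ q ^ 2))
    (hmul : σ ((m : ℂ) * z) = (-1 : ℂ) ^ (m - 1) * σ z ^ (m ^ 2) * Ψ)
    (h1 : σ z ≠ 0) (h2 : σ q ≠ 0) (h3 : σ ((m : ℂ) * z) ≠ 0) (h4 : σ (z + q) ≠ 0) :
    (w₁ - w₂) ^ m * Ψ *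
        ((σ ((m : ℂ) * z + q) * Complex.exp (-c * ((m : ℂ) * z)) / (σ ((m : ℂ) * z) * σ q)) /
          (σ (z + q) * Complex.exp (-c * z) / (σ z * σ q)) ^ m) =
      (-1 : ℂ) ^ (m - 1) * σ (q - z) ^ m * σ ((m : ℂ) * z + q) /
        (σ z ^ (m + m ^ 2) * σ q ^ (m + 1)) := by
  have hzq : σ (z - q) = -σ (q - z) := by
    have h := hodd (q - z); rwa [neg_sub] at h
  have hw : w₁ - w₂ = σ (z + q) * σ (q - z) / (σ z ^ 2 * σ q ^ 2) := by
    rw [hadd, hzq]; ring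
  have hexp : Complex.exp (-c * ((m : ℂ) * z)) = Complex.exp (-c * z) ^ m := by
    rw [← Complex.exp_nat_mul]; ring_nf
  have hΨ : Ψ ≠ 0 := by
    intro h
    rw [h, mul_zero] at hmul
    exact h3 hmul
  have hen : (Complex.exp (-c * z)) ≠ 0 := Complex.exp_ne_zero _
  have hs : ((-1 : ℂ)) ^ (m - 1) * (-1 : ℂ) ^ (m - 1) = 1 := by
    rw [← pow_add]; exact Even.neg_one_pow ⟨m - 1, rfl⟩
  rw [hw, hexp, hmul]
  have hne : ((-1 : ℂ)) ^ (m - 1) ≠ 0 := by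
    apply pow_ne_zero; norm_num
  field_simp
  rw [show ((-1 : ℂ) ^ (m - 1)) ^ 2 = 1 by rw [sq]; exact hs, div_pow, div_pow]
  field_simp
  ring
end

section
/- Let σ, F, G : ℂ → ℂ, let m, n be nonzero integers, and let q, z, c_q, c′, c ∈ ℂ. Assume: (i) σ(m·w/n)^(n²) = σ(w)^(m²)·F(w) for all w ∈ ℂ; (ii) σ(n·q/m)^(m²) = σ(q)^(n²)·G(q); (iii) m²·c′ = n·m·c_q + (m/n)·c; (iv) σ(z) ≠ 0, σ(q) ≠ 0, σ(m·z/n) ≠ 0, σ(n·q/m) ≠ 0, F(z) ≠ 0, and G(q) ≠ 0. Define f_q(v) := σ(v+q)·exp(−c_q·v)/(σ(v)·σ(q)) and f_{nq/m}(v) := σ(v + n·q/m)·exp(−c′·v)/(σ(v)·σ(n·q/m)). Then f_q(m·z/n)^(n²) = f_{nq/m}(z)^(m²) · F(z + n·q/m)·G(q)/F(z) · exp(c·m·z/n). -/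
open Complex

theorem serre_multiplication_rational (σ F G : ℂ → ℂ) (m n : ℤ) (hm : m ≠ 0) (hn : n ≠ 0)
    (q z cq c' c : ℂ)
    (h1 : ∀ w : ℂ, σ ((m : ℂ) * w / (n : ℂ)) ^ (n ^ 2) = σ w ^ (m ^ 2) * F w)
    (h2 : σ ((n : ℂ) * q / (m : ℂ)) ^ (m ^ 2) = σ q ^ (n ^ 2) * G q)
    (h3 : (m : ℂ) ^ 2 * c' = (n : ℂ) * (m : ℂ) * cq + ((m : ℂ) / (n : ℂ)) * c)
    (h4 : σ z ≠ 0) (h5 : σ q ≠ 0) (h6 : σ ((m : ℂ) * z / (n : ℂ)) ≠ 0)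
    (h7 : σ ((n : ℂ) * q / (m : ℂ)) ≠ 0) (h8 : F z ≠ 0) (h9 : G q ≠ 0) :
    (σ ((m : ℂ) * z / (n : ℂ) + q) * Complex.exp (-cq * ((m : ℂ) * z / (n : ℂ))) /
          (σ ((m : ℂ) * z / (n : ℂ)) * σ q)) ^ (n ^ 2) =
      (σ (z + (n : ℂ) * q / (m : ℂ)) * Complex.exp (-c' * z) /
            (σ z * σ ((n : ℂ) * q / (m : ℂ)))) ^ (m ^ 2) *
        (F (z + (n : ℂ) * q / (m : ℂ)) * G q / F z) *
        Complex.exp (c * ((m : ℂ) * z / (n : ℂ))) := by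
  have hm' : (m:ℂ) ≠ 0 := Int.cast_ne_zero.mpr hm
  have hn' : (n:ℂ) ≠ 0 := Int.cast_ne_zero.mpr hn
  have key : (m:ℂ) * (z + (n:ℂ)*q/(m:ℂ)) / (n:ℂ) = (m:ℂ)*z/(n:ℂ) + q := by
    field_simp
  have h1' := h1 (z + (n:ℂ)*q/(m:ℂ))
  rw [key] at h1'
  have h1z := h1 z
  have hE : Complex.exp (-cq * ((m:ℂ)*z/(n:ℂ))) ^ ((n:ℤ)^2) =
      Complex.exp (-c' * z) ^ ((m:ℤ)^2) * Complex.exp (c * ((m:ℂ)*z/(n:ℂ))) := by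
    rw [← Complex.exp_int_mul, ← Complex.exp_int_mul, ← Complex.exp_add]
    congr 1
    push_cast
    have h3' : (n:ℂ) * ((m:ℂ)^2 * c') = (n:ℂ) * ((n:ℂ) * (m:ℂ) * cq) + (m:ℂ) * c := by
      rw [h3]; field_simp
    field_simp
    have h3'' : (n:ℂ) * (m:ℂ) * c' = (n:ℂ)^2 * cq + c := mul_left_cancel₀ hm' (by linear_combination h3')
    linear_combination z * h3''
  rw [div_zpow, mul_zpow, div_zpow, mul_zpow, mul_zpow, mul_zpow, h1', h1z, h2, hE]
  field_simp
end

section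
/- Let σ, g : ℂ → ℂ, let A, C be positive integers, let λ, κ, q, z, c_q, c′ ∈ ℂ with λ ≠ 0. Assume: (i) σ(λ·w)² = σ(w)^(2AC)·exp(−κ·λ·w²)·g(w) for all w ∈ ℂ; (ii) σ(z) ≠ 0, σ(q) ≠ 0, σ(λz) ≠ 0, σ(q/λ) ≠ 0, and g(z) ≠ 0. Define f_q(v) := σ(v+q)·exp(−c_q·v)/(σ(v)·σ(q)) and f_{q/λ}(v) := σ(v + q/λ)·exp(−c′·v)/(σ(v)·σ(q/λ)). Then f_q(λz)² = f_{q/λ}(z)^(2AC) · σ(q/λ)^(2AC) · (g(z + q/λ)/(g(z)·σ(q)²)) · exp(−κ·q²/λ) · exp(−2z·(c_q·λ + κ·q − c′·A·C)). -/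
open Complex

theorem serre_multiplication_cm (σ g : ℂ → ℂ) (A C : ℕ) (hA : 0 < A) (hC : 0 < C)
    (lam κ q z cq c' : ℂ) (hlam : lam ≠ 0)
    (h1 : ∀ w : ℂ, σ (lam * w) ^ 2 =
      σ w ^ (2 * A * C) * Complex.exp (-κ * lam * w ^ 2) * g w)
    (h2 : σ z ≠ 0) (h3 : σ q ≠ 0) (h4 : σ (lam * z) ≠ 0) (h5 : σ (q / lam) ≠ 0)
    (h6 : g z ≠ 0) :
    (σ (lam * z + q) * Complex.exp (-cq * (lam * z)) / (σ (lam * z) * σ q)) ^ 2 =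
      (σ (z + q / lam) * Complex.exp (-c' * z) / (σ z * σ (q / lam))) ^ (2 * A * C) *
          σ (q / lam) ^ (2 * A * C) *
          (g (z + q / lam) / (g z * σ q ^ 2)) *
          Complex.exp (-κ * q ^ 2 / lam) *
          Complex.exp (-2 * z * (cq * lam + κ * q - c' * (A : ℂ) * (C : ℂ))) := by
  have key : lam * z + q = lam * (z + q / lam) := by field_simp
  have hexp : Complex.exp (-κ * lam * (z + q / lam) ^ 2) * Complex.exp (-cq * (lam * z)) ^ 2 =
      Complex.exp (-κ * lam * z ^ 2) *
        (Complex.exp (-c' * z) ^ (2 * A * C) * Complex.exp (-κ * q ^ 2 / lam) *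
          Complex.exp (-2 * z * (cq * lam + κ * q - c' * (A : ℂ) * (C : ℂ)))) := by
    rw [← Complex.exp_nat_mul, ← Complex.exp_nat_mul, ← Complex.exp_add, ← Complex.exp_add,
      ← Complex.exp_add, ← Complex.exp_add]
    congr 1
    push_cast
    field_simp
    ring
  rw [key, div_pow, div_pow, mul_pow, mul_pow, mul_pow, h1, h1]
  rw [div_eq_iff (by
    exact mul_ne_zero (mul_ne_zero (mul_ne_zero (pow_ne_zero _ h2) (Complex.exp_ne_zero _)) h6)
      (pow_ne_zero _ h3))]
  calc σ (z + q / lam) ^ (2 * A * C) * Complex.exp (-κ * lam * (z + q / lam) ^ 2) *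
        g (z + q / lam) * Complex.exp (-cq * (lam * z)) ^ 2
      = σ (z + q / lam) ^ (2 * A * C) * g (z + q / lam) *
        (Complex.exp (-κ * lam * (z + q / lam) ^ 2) * Complex.exp (-cq * (lam * z)) ^ 2) := by
        ring
    _ = σ (z + q / lam) ^ (2 * A * C) * g (z + q / lam) *
        (Complex.exp (-κ * lam * z ^ 2) *
          (Complex.exp (-c' * z) ^ (2 * A * C) * Complex.exp (-κ * q ^ 2 / lam) *
            Complex.exp (-2 * z * (cq * lam + κ * q - c' * (A : ℂ) * (C : ℂ))))) := by
        rw [hexp]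
    _ = _ := by field_simp; ring
end

section
/- Let τ ∈ ℂ be non-real, let A, B, C ∈ ℤ with C > 0 and A + B·τ + C·τ² = 0, let κ ∈ ℂ be algebraic over ℚ, and let ω₁, ω₂, η₁, η₂ ∈ ℂ satisfy: ω₂ = τ·ω₁; ω₂·η₁ − ω₁·η₂ = 2πi; and A·η₁ − C·τ·η₂ − κ·ω₂ = 0. If ω₁ and π are algebraically independent over ℚ, then there is no rational number r with ω₁·η₁ = 2πi·r, and there is no rational number r with ω₂·η₂ = 2πi·r. -/
open Complex

open Polynomial in

set_option synthInstance.maxHeartbeats 1000000 in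
set_option maxHeartbeats 1000000 in
-- key lemma: x^4 = γ y^2 with γ algebraic contradicts algebraic independence of x, y
lemma cm_key (x y γ : ℂ) (hind : AlgebraicIndependent ℚ ![x, y])
    (hγ : IsAlgebraic ℚ γ) (h : x ^ 4 = γ * y ^ 2) : False := by
  classical
  -- x is transcendental over adjoin ℚ {y}
  have hy1 : AlgebraicIndependent ℚ (fun _ : Fin 1 => y) := by
    have h1 := hind.comp ![1] (Function.injective_of_subsingleton _)
    convert h1 using 1
    funext i; fin_cases i; rfl
  have hfe : (![x, y] : Fin 2 → ℂ) ∘ (finSuccEquiv 1).symm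
      = fun o : Option (Fin 1) => o.elim x (fun _ : Fin 1 => y) := by
    funext o
    rcases o with _ | i
    · simp [finSuccEquiv_symm_none]
    · fin_cases i; simp [finSuccEquiv_symm_some]
  have hopt : AlgebraicIndependent ℚ (fun o : Option (Fin 1) => o.elim x (fun _ : Fin 1 => y)) :=
    (algebraicIndependent_equiv' (finSuccEquiv 1).symm hfe).2 hind
  have hT : Transcendental (Algebra.adjoin ℚ (Set.range fun _ : Fin 1 => y)) x :=
    (hy1.option_iff_transcendental x).1 hopt
  set R := Algebra.adjoin ℚ (Set.range fun _ : Fin 1 => y) with hR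
  have hyR : y ∈ R := Algebra.subset_adjoin ⟨0, rfl⟩
  have hint : IsIntegral ℚ γ := isAlgebraic_iff_isIntegral.1 hγ
  set p := minpoly ℚ γ with hp
  set n := p.natDegree with hn
  have hmonic : p.Monic := minpoly.monic hint
  have hQy : R := ⟨y, hyR⟩
  set Q : Polynomial R := ∑ i ∈ Finset.range (n + 1),
      Polynomial.monomial (4 * i) ((p.coeff i) • (⟨y, hyR⟩ : R) ^ (2 * (n - i))) with hQ
  have hQne : Q ≠ 0 := by
    intro h0
    have hc : Q.coeff (4 * n) = 1 := by
      rw [hQ, Polynomial.finset_sum_coeff]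
      rw [Finset.sum_eq_single n]
      · simp [Polynomial.coeff_monomial, show p.coeff n = 1 from hmonic.coeff_natDegree]
      · intro i hi hne
        rw [Polynomial.coeff_monomial, if_neg (by omega)]
      · intro hn'
        exact absurd (Finset.self_mem_range_succ n) hn'
    rw [h0] at hc
    simp at hc
  have hQeval : Polynomial.aeval x Q = 0 := by
    rw [hQ, map_sum]
    have hterm : ∀ i ∈ Finset.range (n + 1),
        Polynomial.aeval x (Polynomial.monomial (4 * i)
          ((p.coeff i) • (⟨y, hyR⟩ : R) ^ (2 * (n - i))))
        = (p.coeff i • γ ^ i) * y ^ (2 * n) := by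
      intro i hi
      rw [Polynomial.aeval_monomial]
      have hcast : (algebraMap R ℂ) ((p.coeff i) • (⟨y, hyR⟩ : R) ^ (2 * (n - i)))
          = (p.coeff i : ℚ) • y ^ (2 * (n - i)) := rfl
      rw [hcast]
      have hx4 : x ^ (4 * i) = γ ^ i * y ^ (2 * i) := by
        have h' : x ^ (4 * i) = (x ^ 4) ^ i := by rw [← pow_mul]
        rw [h', h, mul_pow, ← pow_mul]
      have hle : i ≤ n := by have := Finset.mem_range.1 hi; omega
      rw [hx4, smul_mul_assoc, smul_mul_assoc]
      congr 1
      rw [show 2 * n = 2 * (n - i) + 2 * i by omega, pow_add]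
      ring
    rw [Finset.sum_congr rfl hterm, ← Finset.sum_mul, ← Polynomial.aeval_eq_sum_range,
      minpoly.aeval, zero_mul]
  exact hT ⟨Q, hQne, hQeval⟩

lemma cm_helper2 (x y α β : ℂ) (hind : AlgebraicIndependent ℚ ![x, y]) (hy : y ≠ 0)
    (hα : IsAlgebraic ℚ α) (hβ : IsAlgebraic ℚ β) (hβ0 : β ≠ 0)
    (h : α * x ^ 2 = 2 * y * Complex.I * β) : False := by
  have hα0 : α ≠ 0 := by
    intro h0
    rw [h0, zero_mul] at h
    have := h.symm
    simp [hy, hβ0, I_ne_zero] at this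
  have hγ : IsAlgebraic ℚ (-4 * (β / α) ^ 2) := by
    rw [isAlgebraic_iff_isIntegral]
    have h4 : IsIntegral ℚ ((-4 : ℤ) : ℂ) := isAlgebraic_iff_isIntegral.1 (isAlgebraic_int (-4))
    have hd : IsIntegral ℚ (β / α) := by
      rw [div_eq_mul_inv]
      exact (isAlgebraic_iff_isIntegral.1 hβ).mul (isAlgebraic_iff_isIntegral.1 hα).inv
    have := h4.mul (hd.pow 2)
    simpa using this
  refine cm_key x y (-4 * (β / α) ^ 2) hind hγ ?_
  field_simp
  linear_combination (α * x ^ 2 + 2 * y * I * β) * h + 4 * y ^ 2 * β ^ 2 * Complex.I_sq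

theorem cm_period_quasiperiod_products_irrational (τ : ℂ) (hτ : τ.im ≠ 0)
    (A B C : ℤ) (hC : 0 < C)
    (hquad : (A : ℂ) + (B : ℂ) * τ + (C : ℂ) * τ ^ 2 = 0)
    (κ : ℂ) (hκ : IsAlgebraic ℚ κ)
    (ω₁ ω₂ η₁ η₂ : ℂ)
    (h1 : ω₂ = τ * ω₁)
    (h2 : ω₂ * η₁ - ω₁ * η₂ = 2 * (Real.pi : ℂ) * Complex.I)
    (h3 : (A : ℂ) * η₁ - (C : ℂ) * τ * η₂ - κ * ω₂ = 0)
    (hind : AlgebraicIndependent ℚ ![ω₁, (Real.pi : ℂ)]) :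
    (¬ ∃ r : ℚ, ω₁ * η₁ = 2 * (Real.pi : ℂ) * Complex.I * (r : ℂ)) ∧
    (¬ ∃ r : ℚ, ω₂ * η₂ = 2 * (Real.pi : ℂ) * Complex.I * (r : ℂ)) := by
  subst h1
  have hπ : (Real.pi : ℂ) ≠ 0 := ofReal_ne_zero.2 Real.pi_ne_zero
  have hτ0 : τ ≠ 0 := fun h => hτ (by simp [h])
  have ratind : ∀ a b : ℚ, (a : ℂ) + (b : ℂ) * τ = 0 → a = 0 ∧ b = 0 := by
    intro a b hab
    have him := congrArg Complex.im hab
    simp [Complex.add_im, Complex.mul_im] at him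
    have hb : b = 0 := by
      rcases him with h | h
      · exact_mod_cast h
      · exact absurd h hτ
    refine ⟨?_, hb⟩
    rw [hb] at hab
    simpa using hab
  have hCQ : (C : ℚ) ≠ 0 := by exact_mod_cast hC.ne'
  have hAne : A = 0 → False := by
    intro hA
    rw [hA] at hquad
    have h' : τ * ((B : ℂ) + (C : ℂ) * τ) = 0 := by push_cast at hquad ⊢; linear_combination hquad
    have h'' : (B : ℂ) + (C : ℂ) * τ = 0 := by
      rcases mul_eq_zero.1 h' with h | h
      · exact absurd h hτ0
      · exact h
    have := ratind (B : ℚ) (C : ℚ) (by push_cast; exact h'')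
    exact hCQ this.2
  have hτalg : IsAlgebraic ℚ τ := by
    refine ⟨Polynomial.C (A : ℚ) + Polynomial.C (B : ℚ) * Polynomial.X
      + Polynomial.C (C : ℚ) * Polynomial.X ^ 2, ?_, ?_⟩
    · intro h0
      have hco := congrArg (fun q => Polynomial.coeff q 2) h0
      simp only [Polynomial.coeff_add, Polynomial.coeff_C_mul, Polynomial.coeff_X_pow,
        Polynomial.coeff_C, Polynomial.coeff_X, Polynomial.coeff_zero] at hco
      norm_num at hco
      exact hC.ne' hco
    · simp only [map_add, map_mul, map_pow, Polynomial.aeval_C, Polynomial.aeval_X]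
      have hc : ∀ n : ℤ, (algebraMap ℚ ℂ) ((n : ℚ)) = (n : ℂ) := by
        intro n; rw [eq_ratCast]; push_cast; ring
      rw [hc, hc, hc]
      exact hquad
  have hτint : IsIntegral ℚ τ := isAlgebraic_iff_isIntegral.1 hτalg
  have hκint : IsIntegral ℚ κ := isAlgebraic_iff_isIntegral.1 hκ
  have hM : (2 * (A : ℂ) + (B : ℂ) * τ) * (ω₁ * η₁)
      = κ * τ * ω₁ ^ 2 - 2 * (Real.pi : ℂ) * I * ((C : ℂ) * τ) := by
    linear_combination ω₁ * h3 - (C : ℂ) * τ * h2 + (ω₁ * η₁) * hquad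
  have hβalg : ∀ a b : ℚ, IsAlgebraic ℚ ((a : ℂ) + (b : ℂ) * τ) := by
    intro a b
    refine isAlgebraic_iff_isIntegral.2 ?_
    exact (isAlgebraic_iff_isIntegral.1 (isAlgebraic_rat ℚ a)).add
      ((isAlgebraic_iff_isIntegral.1 (isAlgebraic_rat ℚ b)).mul hτint)
  constructor
  · rintro ⟨r, hr⟩
    have hβ0 : (((2 * A * r : ℚ) : ℂ) + ((B * r + C : ℚ) : ℂ) * τ) ≠ 0 := by
      intro h0
      obtain ⟨ha, hb⟩ := ratind _ _ h0
      have hr0 : r ≠ 0 := by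
        intro h
        rw [h] at hb
        simp at hb
        exact hCQ (by exact_mod_cast hb)
      have hA : (A : ℚ) = 0 := by
        rcases mul_eq_zero.1 ha with h' | h'
        · rcases mul_eq_zero.1 h' with h'' | h''
          · norm_num at h''
          · exact h''
        · exact absurd h' hr0
      exact hAne (by exact_mod_cast hA)
    have hEq : (κ * τ) * ω₁ ^ 2
        = 2 * (Real.pi : ℂ) * I * (((2 * A * r : ℚ) : ℂ) + ((B * r + C : ℚ) : ℂ) * τ) := by
      push_cast
      linear_combination -hM + (2 * (A : ℂ) + (B : ℂ) * τ) * hr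
    exact cm_helper2 ω₁ (Real.pi : ℂ) (κ * τ) _ hind hπ
      (isAlgebraic_iff_isIntegral.2 (hκint.mul hτint)) (hβalg _ _) hβ0 hEq
  · rintro ⟨r, hr⟩
    have hβ0 : (((2 * A * r : ℚ) : ℂ) + ((A + B * r : ℚ) : ℂ) * τ) ≠ 0 := by
      intro h0
      obtain ⟨ha, hb⟩ := ratind _ _ h0
      have hA : (A : ℚ) = 0 := by
        rcases eq_or_ne r 0 with h | h
        · rw [h] at hb; linarith
        · rcases mul_eq_zero.1 ha with h' | h'
          · rcases mul_eq_zero.1 h' with h'' | h''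
            · norm_num at h''
            · exact h''
          · exact absurd h' h
      exact hAne (by exact_mod_cast hA)
    have hEq : (κ * τ ^ 3) * ω₁ ^ 2
        = 2 * (Real.pi : ℂ) * I * (((2 * A * r : ℚ) : ℂ) + ((A + B * r : ℚ) : ℂ) * τ) := by
      push_cast
      linear_combination (-τ ^ 2) * hM + (2 * (A : ℂ) + (B : ℂ) * τ) * τ * h2
        + (2 * (A : ℂ) + (B : ℂ) * τ) * hr + (2 * (Real.pi : ℂ) * I * τ) * hquad
    exact cm_helper2 ω₁ (Real.pi : ℂ) (κ * τ ^ 3) _ hind hπ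
      (isAlgebraic_iff_isIntegral.2 (hκint.mul (hτint.pow 3))) (hβalg _ _) hβ0 hEq
end

section
/- Let ρ = (−1 + i·√3)/2 ∈ ℂ, let ω₁, η₁ ∈ ℂ, and set ω₂ = ρ·ω₁ and η₂ = ρ²·η₁. Assume the Legendre relation ω₂·η₁ − ω₁·η₂ = 2πi. Then ω₁·η₁ = 2π/√3, and for all integers a, b, putting ω = a·ω₁ + b·ω₂ and η = a·η₁ + b·η₂, one has ω·η = (a² − a·b + b²)·(2π/√3); moreover, if (a,b) ≠ (0,0) then there is no rational number r with ω·η = 2πi·r. -/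
/-!
Since ρ² + ρ + 1 = 0, the product ω·η = (a + bρ)(a + bρ²)·ω₁η₁ equals the norm form
a² − ab + b² times ω₁η₁, and the Legendre relation reads (ρ − ρ²)·ω₁η₁ = i√3·ω₁η₁ = 2πi,
so ω₁η₁ = 2π/√3. Hence ω·η is real, and nonzero for (a, b) ≠ (0, 0) because the norm form
is positive definite, while 2πi·r is purely imaginary.
-/

open Complex

section NormForm

variable {R : Type*}

theorem add_mul_mul_add_mul_sq_of_sq_add_self_add_one [CommRing R] {ρ : R}
    (hρ : ρ ^ 2 + ρ + 1 = 0) (a b : R) :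
    (a + b * ρ) * (a + b * ρ ^ 2) = a ^ 2 - a * b + b ^ 2 := by
  linear_combination (a * b + b ^ 2 * (ρ - 1)) * hρ

theorem sq_sub_mul_add_sq_ne_zero [CommRing R] [LinearOrder R] [IsStrictOrderedRing R]
    {a b : R} (hab : (a, b) ≠ (0, 0)) : a ^ 2 - a * b + b ^ 2 ≠ 0 := by
  contrapose! hab
  -- 4 (a² − ab + b²) = (2a − b)² + 3b²
  have hb : b = 0 := by nlinarith [sq_nonneg (2 * a - b), sq_nonneg b]
  subst hb
  simpa using hab

end NormForm

section PeriodLattice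

variable {R : Type*} [CommRing R] {ρ ω₁ ω₂ η₁ η₂ : R}

theorem period_mul_quasiPeriod_eq (hρ : ρ ^ 2 + ρ + 1 = 0) (hω₂ : ω₂ = ρ * ω₁)
    (hη₂ : η₂ = ρ ^ 2 * η₁) (a b : R) :
    (a * ω₁ + b * ω₂) * (a * η₁ + b * η₂) = (a ^ 2 - a * b + b ^ 2) * (ω₁ * η₁) := by
  rw [← add_mul_mul_add_mul_sq_of_sq_add_self_add_one hρ, hω₂, hη₂]
  ring

theorem legendre_eq_of_periods (hω₂ : ω₂ = ρ * ω₁) (hη₂ : η₂ = ρ ^ 2 * η₁) :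
    ω₂ * η₁ - ω₁ * η₂ = (ρ - ρ ^ 2) * (ω₁ * η₁) := by
  rw [hω₂, hη₂]
  ring

end PeriodLattice

section CubeRoot

variable {ρ : ℂ}

theorem sq_add_self_add_one_of_eq_cubeRoot (hρ : ρ = (-1 + I * (Real.sqrt 3 : ℂ)) / 2) :
    ρ ^ 2 + ρ + 1 = 0 := by
  have h3 : (Real.sqrt 3 : ℂ) ^ 2 = 3 := by
    exact_mod_cast Real.sq_sqrt (by norm_num : (0 : ℝ) ≤ 3)
  rw [hρ]
  linear_combination ((Real.sqrt 3 : ℂ) ^ 2 / 4) * I_sq - (1 / 4 : ℂ) * h3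

theorem sub_sq_of_eq_cubeRoot (hρ : ρ = (-1 + I * (Real.sqrt 3 : ℂ)) / 2) :
    ρ - ρ ^ 2 = I * (Real.sqrt 3 : ℂ) := by
  have h := sq_add_self_add_one_of_eq_cubeRoot hρ
  rw [hρ] at h ⊢
  linear_combination -h

end CubeRoot

theorem ofReal_eq_I_mul_ofReal_iff {x y : ℝ} : (x : ℂ) = I * y ↔ x = 0 ∧ y = 0 := by
  constructor
  · intro h
    exact ⟨by simpa using congrArg re h, by simpa using (congrArg im h).symm⟩
  · rintro ⟨rfl, rfl⟩
    simp

theorem equianharmonic_period_products (ω₁ η₁ ω₂ η₂ : ℂ)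
    (ρ : ℂ) (hρ : ρ = (-1 + Complex.I * (Real.sqrt 3 : ℂ)) / 2)
    (hω₂ : ω₂ = ρ * ω₁) (hη₂ : η₂ = ρ ^ 2 * η₁)
    (hL : ω₂ * η₁ - ω₁ * η₂ = 2 * (Real.pi : ℂ) * Complex.I) :
    ω₁ * η₁ = 2 * (Real.pi : ℂ) / (Real.sqrt 3 : ℂ) ∧
    ∀ a b : ℤ,
      ((a : ℂ) * ω₁ + (b : ℂ) * ω₂) * ((a : ℂ) * η₁ + (b : ℂ) * η₂) =
          ((a ^ 2 - a * b + b ^ 2 : ℤ) : ℂ) * (2 * (Real.pi : ℂ) / (Real.sqrt 3 : ℂ)) ∧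
      ((a, b) ≠ (0, 0) →
        ¬ ∃ r : ℚ, ((a : ℂ) * ω₁ + (b : ℂ) * ω₂) * ((a : ℂ) * η₁ + (b : ℂ) * η₂) =
            2 * (Real.pi : ℂ) * Complex.I * (r : ℂ)) := by
  have hsqrt3 : (Real.sqrt 3 : ℂ) ≠ 0 := ofReal_ne_zero.mpr (by positivity)
  have h₁ : ω₁ * η₁ = 2 * (Real.pi : ℂ) / (Real.sqrt 3 : ℂ) := by
    rw [legendre_eq_of_periods hω₂ hη₂, sub_sq_of_eq_cubeRoot hρ] at hL
    rw [eq_div_iff hsqrt3]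
    exact mul_left_cancel₀ I_ne_zero (by linear_combination hL)
  have hprod (a b : ℤ) : ((a : ℂ) * ω₁ + (b : ℂ) * ω₂) * ((a : ℂ) * η₁ + (b : ℂ) * η₂) =
      ((a ^ 2 - a * b + b ^ 2 : ℤ) : ℂ) * (2 * (Real.pi : ℂ) / (Real.sqrt 3 : ℂ)) := by
    rw [period_mul_quasiPeriod_eq (sq_add_self_add_one_of_eq_cubeRoot hρ) hω₂ hη₂, h₁]
    push_cast
    ring
  refine ⟨h₁, fun a b => ⟨hprod a b, fun hab ⟨r, hr⟩ => ?_⟩⟩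
  rw [hprod] at hr
  have hreal := (ofReal_eq_I_mul_ofReal_iff
    (x := (a ^ 2 - a * b + b ^ 2 : ℤ) * (2 * Real.pi / Real.sqrt 3)) (y := 2 * Real.pi * r)).mp
    (by push_cast at hr ⊢; linear_combination hr)
  have hne : 2 * Real.pi / Real.sqrt 3 ≠ 0 := by positivity
  exact sq_sub_mul_add_sq_ne_zero hab
    (by exact_mod_cast (mul_eq_zero.mp hreal.1).resolve_right hne)
end
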